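/- arXiv:2210.10934 — 4 statements merged into one kernel-verified Lean document; each statement's English description precedes it below -/
import Mathlib

section
/- Let A be a filtered k-algebra and 0 → B → C → D → 0 an exact sequence of filtered A-modules with strict maps (so 0 → F^n B → F^n C → F^n D → 0 is exact for all n), where B, C, D all lie in AF_A. Then the dual sequence 0 → D* → C* → B* → 0 is exact, and is strict for the induced filtrations on the duals. -/
/-- `C` with filtration `FC` lies in the category `AF_A`: the filtration is a descending,
finite filtration of `A`-submodules, and each graded piece `F^n C / F^{n+1} C` is a
finitely generated projective `k`-module. -/
def IsAF (k : Type*) [CommRing k] {A : Type*} [CommRing A] [Algebra k A]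
    {C : Type*} [AddCommGroup C] [Module k C] [Module A C] [IsScalarTower k A C]
    (FC : ℤ → Submodule A C) : Prop :=
  Antitone FC ∧ (∃ n0 : ℤ, ∀ n ≤ n0, FC n = ⊤) ∧ (∃ n1 : ℤ, ∀ n ≥ n1, FC n = ⊥) ∧
  ∀ n : ℤ, Module.Finite k (↥(FC n) ⧸ (FC (n + 1)).comap (FC n).subtype) ∧
    Module.Projective k (↥(FC n) ⧸ (FC (n + 1)).comap (FC n).subtype)

/-!
Dualizing is left exact, so the only issue is lifting a functional on `B` that kills
`F^{1-n} B` to one on `C` that kills `F^{1-n} C`. Strictness makes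
`0 → B/F^m B → C/F^m C → D/F^m D → 0` exact, and `D/F^m D` is an iterated extension of the
projective graded pieces of `D`, hence projective; so this sequence splits over `k` and
the functional extends through the retraction. Surjectivity of `β*` is the case where
`F^{1-n} B = 0`.
-/

namespace Submodule

section Ring

variable {R M N : Type*} [Ring R] [AddCommGroup M] [AddCommGroup N] [Module R M] [Module R N]

theorem mapQ_comap_injective (f : M →ₗ[R] N) (q : Submodule R N) :
    Function.Injective ((q.comap f).mapQ q f le_rfl) := by
  rw [← LinearMap.ker_eq_bot, ker_mapQ, mkQ_map_self]

theorem mapQ_map_surjective {f : M →ₗ[R] N} (hf : Function.Surjective f) (p : Submodule R M) :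
    Function.Surjective (p.mapQ (p.map f) f (le_comap_map f p)) := by
  rw [← LinearMap.range_eq_top, range_mapQ, LinearMap.range_eq_top.mpr hf, map_top, range_mkQ]

theorem exact_mapQ_subtype_factor {p q : Submodule R M} (hqp : q ≤ p) :
    Function.Exact ((q.comap p.subtype).mapQ q p.subtype le_rfl) (factor hqp) := by
  rw [LinearMap.exact_iff, ker_mapQ, range_mapQ, range_subtype, comap_id]

end Ring

section CommRing

variable {R M N : Type*} [CommRing R] [AddCommGroup M] [AddCommGroup N] [Module R M] [Module R N]

theorem comap_dualMap_dualAnnihilator (f : M →ₗ[R] N) (p : Submodule R M) :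
    p.dualAnnihilator.comap f.dualMap = (p.map f).dualAnnihilator := by
  ext φ
  simp [mem_dualAnnihilator]

theorem map_dualMap_dualAnnihilator_map (f : M →ₗ[R] N) (p : Submodule R M) :
    (p.map f).dualAnnihilator.map f.dualMap = LinearMap.range f.dualMap ⊓ p.dualAnnihilator := by
  rw [← comap_dualMap_dualAnnihilator, map_comap_eq]

end CommRing

end Submodule

namespace Function.Exact

variable {R M N P : Type*} [Ring R] [AddCommGroup M] [AddCommGroup N] [AddCommGroup P]
  [Module R M] [Module R N] [Module R P] {f : M →ₗ[R] N} {g : N →ₗ[R] P}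

theorem exists_retraction_of_projective [Module.Projective R P] (h : Exact f g)
    (hf : Injective f) (hg : Surjective g) : ∃ l : N →ₗ[R] M, l ∘ₗ f = LinearMap.id :=
  ((h.split_tfae hf hg).out 0 1).mp
    (LinearMap.exists_rightInverse_of_surjective g (LinearMap.range_eq_top.mpr hg))

theorem mapQ_comap_map (h : Exact f g) (q : Submodule R N) :
    Exact ((q.comap f).mapQ q f le_rfl) (q.mapQ (q.map g) g (Submodule.le_comap_map g q)) :=
  (h.exact_mapQ_iff _ _).mpr inf_le_right

end Function.Exact

theorem Function.Exact.map_dualMap_dualAnnihilator {R M N P : Type*} [CommRing R]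
    [AddCommGroup M] [AddCommGroup N] [AddCommGroup P] [Module R M] [Module R N] [Module R P]
    {f : M →ₗ[R] N} {g : N →ₗ[R] P} (h : Exact f g) (hg : Surjective g) (q : Submodule R N)
    [Module.Projective R (P ⧸ q.map g)] :
    q.dualAnnihilator.map f.dualMap = (q.comap f).dualAnnihilator := by
  refine le_antisymm (q.dualAnnihilator_map_dualMap_le f) fun φ hφ ↦ ?_
  obtain ⟨l, hl⟩ := (h.mapQ_comap_map q).exists_retraction_of_projective
    (q.mapQ_comap_injective f) (q.mapQ_map_surjective hg)
  rw [← Submodule.range_dualMap_mkQ_eq] at hφ ⊢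
  obtain ⟨ψ, rfl⟩ := hφ
  refine ⟨q.mkQ.dualMap (ψ ∘ₗ l), LinearMap.mem_range_self _ _, ?_⟩
  ext x
  exact congr(ψ ($hl (Submodule.Quotient.mk x)))

theorem Module.Projective.of_exact {R M N P : Type*} [Ring R] [AddCommGroup M] [AddCommGroup N]
    [AddCommGroup P] [Module R M] [Module R N] [Module R P] [Module.Projective R M]
    [Module.Projective R P] {f : M →ₗ[R] N} {g : N →ₗ[R] P} (h : Function.Exact f g)
    (hf : Function.Injective f) (hg : Function.Surjective g) : Module.Projective R N := by
  obtain ⟨e, -⟩ := ((h.split_tfae hf hg).out 0 2).mp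
    (LinearMap.exists_rightInverse_of_surjective g (LinearMap.range_eq_top.mpr hg))
  exact Module.Projective.of_equiv e.symm

theorem Module.Projective.quotient_of_antitone {k A M : Type*} [CommRing k] [Ring A]
    [Algebra k A] [AddCommGroup M] [Module k M] [Module A M] [IsScalarTower k A M]
    {F : ℤ → Submodule A M} (hF : Antitone F) {n₀ : ℤ} (htop : ∀ n ≤ n₀, F n = ⊤)
    (hgr : ∀ n, Module.Projective k (↥(F n) ⧸ (F (n + 1)).comap (F n).subtype)) (m : ℤ) :
    Module.Projective k (M ⧸ F m) := by
  have hbase : ∀ n ≤ n₀, Module.Projective k (M ⧸ F n) := fun n hn ↦ by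
    have : Subsingleton (M ⧸ F n) := Submodule.Quotient.subsingleton_iff.mpr (htop n hn)
    infer_instance
  rcases le_total m n₀ with hm | hm
  · exact hbase m hm
  induction m, hm using Int.leInduction with
  | base => exact hbase n₀ le_rfl
  | succ n _ ih =>
    have hle : F (n + 1) ≤ F n := hF (Int.le_add_one le_rfl)
    have := hgr n
    exact Module.Projective.of_exact
      (f := ((F (n + 1)).comap (F n).subtype |>.mapQ _ (F n).subtype le_rfl).restrictScalars k)
      (g := (Submodule.factor hle).restrictScalars k) (Submodule.exact_mapQ_subtype_factor hle)
      (Submodule.mapQ_comap_injective (F n).subtype (F (n + 1))) (Submodule.factor_surjective hle)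

theorem IsAF.projective_quotient {k A M : Type*} [CommRing k] [CommRing A] [Algebra k A]
    [AddCommGroup M] [Module k M] [Module A M] [IsScalarTower k A M] {F : ℤ → Submodule A M}
    (hF : IsAF k F) (m : ℤ) : Module.Projective k (M ⧸ (F m).restrictScalars k) := by
  obtain ⟨hanti, ⟨n₀, htop⟩, -, hgr⟩ := hF
  have := Module.Projective.quotient_of_antitone hanti htop (fun n ↦ (hgr n).2) m
  exact Module.Projective.of_equiv (Submodule.Quotient.restrictScalarsEquiv k (F m)).symm

theorem dual_of_strict_exact_sequence_general
    (k A : Type) [CommRing k] [CommRing A] [Algebra k A]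
    (B C D : Type) [AddCommGroup B] [Module k B] [Module A B] [IsScalarTower k A B]
    [AddCommGroup C] [Module k C] [Module A C] [IsScalarTower k A C]
    [AddCommGroup D] [Module k D] [Module A D] [IsScalarTower k A D]
    (FB : ℤ → Submodule A B) (FC : ℤ → Submodule A C) (FD : ℤ → Submodule A D)
    (hAFB : IsAF k FB) (hAFD : IsAF k FD)
    (β : B →ₗ[A] C) (γ : C →ₗ[A] D)
    (hγ : Function.Surjective γ)
    (hexact : LinearMap.range β = LinearMap.ker γ)
    (hstrictβ : ∀ n, (FC n).comap β = FB n)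
    (hstrictγ : ∀ n, (FC n).map γ = FD n) :
    Function.Injective ((γ.restrictScalars k).dualMap) ∧
    Function.Surjective ((β.restrictScalars k).dualMap) ∧
    LinearMap.range ((γ.restrictScalars k).dualMap) =
      LinearMap.ker ((β.restrictScalars k).dualMap) ∧
    (∀ n : ℤ,
      (((FD (1 - n)).restrictScalars k).dualAnnihilator).map
          ((γ.restrictScalars k).dualMap) =
        LinearMap.range ((γ.restrictScalars k).dualMap) ⊓
          ((FC (1 - n)).restrictScalars k).dualAnnihilator) ∧
    (∀ n : ℤ,
      (((FC (1 - n)).restrictScalars k).dualAnnihilator).map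
          ((β.restrictScalars k).dualMap) =
        ((FB (1 - n)).restrictScalars k).dualAnnihilator) := by
  set βk := β.restrictScalars k
  set γk := γ.restrictScalars k
  have hexk : Function.Exact βk γk := (LinearMap.exact_iff.mpr hexact.symm : Function.Exact β γ)
  have hstrict : ∀ n : ℤ, (((FC (1 - n)).restrictScalars k).dualAnnihilator).map βk.dualMap =
      ((FB (1 - n)).restrictScalars k).dualAnnihilator := fun n ↦ by
    have := hAFD.projective_quotient (1 - n)
    rw [← hstrictγ, Submodule.restrictScalars_map] at this
    rw [hexk.map_dualMap_dualAnnihilator hγ, ← hstrictβ]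
    rfl
  refine ⟨LinearMap.dualMap_injective_of_surjective hγ, ?_, ?_, fun n ↦ ?_, hstrict⟩
  · obtain ⟨-, -, ⟨n₁, hbot⟩, -⟩ := hAFB
    have := hstrict (1 - n₁)
    rw [sub_sub_cancel, hbot n₁ le_rfl, Submodule.restrictScalars_bot,
      Submodule.dualAnnihilator_bot] at this
    exact LinearMap.range_eq_top.mp (top_unique (this ▸ LinearMap.map_le_range))
  · rw [LinearMap.range_dualMap_eq_dualAnnihilator_ker_of_surjective γk hγ,
      hexk.linearMap_ker_eq, LinearMap.ker_dualMap_eq_dualAnnihilator_range]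
  · rw [← hstrictγ, Submodule.restrictScalars_map, Submodule.map_dualMap_dualAnnihilator_map]

/-- Let `0 → B → C → D → 0` be a strict exact sequence of filtered `A`-modules lying in
`AF_A`.  Then the dual sequence `0 → D* → C* → B* → 0` is exact, and strict for the
induced filtrations `F^n(X*) = (X/F^{1-n}X)*` (annihilators of the `F^{1-n} X`). -/
theorem dual_of_strict_exact_sequence
    (k A : Type) [CommRing k] [IsNoetherianRing k] [CommRing A] [Algebra k A]
    (B C D : Type) [AddCommGroup B] [Module k B] [Module A B] [IsScalarTower k A B]
    [AddCommGroup C] [Module k C] [Module A C] [IsScalarTower k A C]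
    [AddCommGroup D] [Module k D] [Module A D] [IsScalarTower k A D]
    (FA : ℤ → Ideal A) (hFAanti : Antitone FA) (hFA0 : ∀ m : ℤ, m ≤ 0 → FA m = ⊤)
    (hFAmul : ∀ m n : ℤ, FA m * FA n ≤ FA (m + n))
    (FB : ℤ → Submodule A B) (FC : ℤ → Submodule A C) (FD : ℤ → Submodule A D)
    (hFB : ∀ m n : ℤ, FA m • FB n ≤ FB (m + n))
    (hFC : ∀ m n : ℤ, FA m • FC n ≤ FC (m + n))
    (hFD : ∀ m n : ℤ, FA m • FD n ≤ FD (m + n))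
    (hAFB : IsAF k FB) (hAFC : IsAF k FC) (hAFD : IsAF k FD)
    (β : B →ₗ[A] C) (γ : C →ₗ[A] D)
    (hβ : Function.Injective β) (hγ : Function.Surjective γ)
    (hexact : LinearMap.range β = LinearMap.ker γ)
    (hstrictβ : ∀ n, (FC n).comap β = FB n)
    (hstrictγ : ∀ n, (FC n).map γ = FD n) :
    Function.Injective ((γ.restrictScalars k).dualMap) ∧
    Function.Surjective ((β.restrictScalars k).dualMap) ∧
    LinearMap.range ((γ.restrictScalars k).dualMap) =
      LinearMap.ker ((β.restrictScalars k).dualMap) ∧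
    (∀ n : ℤ,
      (((FD (1 - n)).restrictScalars k).dualAnnihilator).map
          ((γ.restrictScalars k).dualMap) =
        LinearMap.range ((γ.restrictScalars k).dualMap) ⊓
          ((FC (1 - n)).restrictScalars k).dualAnnihilator) ∧
    (∀ n : ℤ,
      (((FC (1 - n)).restrictScalars k).dualAnnihilator).map
          ((β.restrictScalars k).dualMap) =
        ((FB (1 - n)).restrictScalars k).dualAnnihilator) :=
  dual_of_strict_exact_sequence_general k A B C D FB FC FD hAFB hAFD β γ hγ hexact hstrictβ hstrictγ
end

section
/- Let A be a filtered k-algebra with A/F^1A = k, and C a filtered A-module in AF_A. Then there is a natural isomorphism of filtered A-modules Soc_k(C) := Hom_A(k, C) ≅ (C* ⊗_A k)*, where C* carries the adjoint A-action. -/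
section AdjointDual

variable {k A : Type*} [CommRing k] [CommRing A] [Algebra k A]
variable {C : Type*} [AddCommGroup C] [Module k C] [Module A C] [IsScalarTower k A C]

/-- The adjoint action of `A` on the `k`-dual of an `A`-module: `(a • f) c = f (a • c)`. -/
instance (priority := 100) adjSMul : SMul A (Module.Dual k C) :=
  ⟨fun a f => f.comp ((LinearMap.lsmul A C a).restrictScalars k)⟩

theorem adj_smul_apply (a : A) (f : Module.Dual k C) (x : C) :
    (a • f) x = f (a • x) := rfl

/-- The `k`-dual of an `A`-module is an `A`-module via the adjoint action. -/
instance (priority := 100) adjModule : Module A (Module.Dual k C) :=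
  { smul := (· • ·)
    one_smul := fun f => by ext x; show f ((1 : A) • x) = f x; rw [one_smul]
    mul_smul := fun a b f => by
      ext x; show f ((a * b) • x) = f (b • a • x); rw [mul_smul, smul_comm]
    smul_zero := fun a => by ext x; rfl
    smul_add := fun a f g => by ext x; rfl
    add_smul := fun a b f => by
      ext x; show f ((a + b) • x) = f (a • x) + f (b • x); rw [add_smul, map_add]
    zero_smul := fun f => by
      ext x; show f ((0 : A) • x) = 0; rw [zero_smul, map_zero] }

instance (priority := 100) adjTower : IsScalarTower k A (Module.Dual k C) :=
  ⟨fun r a f => by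
    ext x; show f ((r • a) • x) = r • f (a • x); rw [smul_assoc, map_smul]⟩

end AdjointDual

/-- The `k`-socle `Soc_k(C) = (0 :_C F^1 A) = Hom_A(k, C)` of an `A`-module. -/
def socleSub (k : Type*) {A : Type*} [CommRing k] [CommRing A] [Algebra k A]
    (C : Type*) [AddCommGroup C] [Module k C] [Module A C] [IsScalarTower k A C]
    (J : Ideal A) : Submodule A C where
  carrier := {c | ∀ ψ ∈ J, ψ • c = 0}
  zero_mem' := fun ψ _ => smul_zero ψ
  add_mem' := by
    intro c d hc hd ψ hψ
    rw [smul_add, hc ψ hψ, hd ψ hψ, add_zero]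
  smul_mem' := by
    intro a c hc ψ hψ
    rw [smul_comm, hc ψ hψ, smul_zero]


theorem auxFinProjOfSubQuot {R M : Type*} [CommRing R] [AddCommGroup M] [Module R M]
    (p : Submodule R M) (h1 : Module.Finite R p) (h2 : Module.Projective R p)
    (h3 : Module.Finite R (M ⧸ p)) (h4 : Module.Projective R (M ⧸ p)) :
    Module.Finite R M ∧ Module.Projective R M := by
  obtain ⟨s, hs⟩ := Module.projective_lifting_property (h := h4) p.mkQ
    (LinearMap.id) (Submodule.mkQ_surjective p)
  have hmem : ∀ x : M, x - s (p.mkQ x) ∈ p := by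
    intro x
    have h0 : p.mkQ (x - s (p.mkQ x)) = 0 := by
      have := LinearMap.congr_fun hs (p.mkQ x)
      simp only [LinearMap.coe_comp, Function.comp_apply, LinearMap.id_apply] at this
      rw [map_sub, this, sub_self]
    rwa [← LinearMap.mem_ker, Submodule.ker_mkQ] at h0
  let f : M →ₗ[R] ↥p × (M ⧸ p) :=
    LinearMap.prod ((LinearMap.id - s ∘ₗ p.mkQ).codRestrict p hmem) p.mkQ
  let g : ↥p × (M ⧸ p) →ₗ[R] M :=
    p.subtype ∘ₗ LinearMap.fst R _ _ + s ∘ₗ LinearMap.snd R _ _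
  have hgf : g ∘ₗ f = LinearMap.id := by
    ext x
    simp [f, g]
  have hfg : f ∘ₗ g = LinearMap.id := by
    apply LinearMap.ext
    rintro ⟨⟨y, hy⟩, z⟩
    have hy0 : p.mkQ y = 0 := by rwa [← LinearMap.mem_ker, Submodule.ker_mkQ]
    have hz : p.mkQ (s z) = z := by
      have := LinearMap.congr_fun hs z
      simpa using this
    refine Prod.ext (Subtype.ext ?_) ?_
    · simp [f, g, hy0, hz]
    · show p.mkQ (g (⟨y, hy⟩, z)) = z
      have hgy : g (⟨y, hy⟩, z) = y + s z := rfl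
      rw [hgy, map_add, hy0, hz, zero_add]
  let e : M ≃ₗ[R] ↥p × (M ⧸ p) := LinearEquiv.ofLinear f g hfg hgf
  constructor
  · exact Module.Finite.equiv e.symm
  · exact Module.Projective.of_equiv e.symm

theorem auxCFinProj {k A C : Type*} [CommRing k] [CommRing A] [Algebra k A]
    [AddCommGroup C] [Module k C] [Module A C] [IsScalarTower k A C]
    (FC : ℤ → Submodule A C)
    (hanti : Antitone FC) (n0 : ℤ) (h0 : ∀ n ≤ n0, FC n = ⊤)
    (n1 : ℤ) (h1 : ∀ n ≥ n1, FC n = ⊥)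
    (hg : ∀ n : ℤ, Module.Finite k (↥(FC n) ⧸ (FC (n + 1)).comap (FC n).subtype) ∧
      Module.Projective k (↥(FC n) ⧸ (FC (n + 1)).comap (FC n).subtype)) :
    Module.Finite k C ∧ Module.Projective k C := by
  have key : ∀ j : ℕ, Module.Finite k ↥(FC (n1 - j)) ∧ Module.Projective k ↥(FC (n1 - j)) := by
    intro j
    induction j with
    | zero =>
      have hb : FC (n1 - (0 : ℕ)) = ⊥ := by
        simpa using h1 n1 le_rfl
      rw [hb]
      have hfin : Module.Finite k ↥(⊥ : Submodule A C) := by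
        refine Module.Finite.of_surjective (0 : k →ₗ[k] ↥(⊥ : Submodule A C)) ?_
        intro x; exact ⟨0, Subsingleton.elim _ _⟩
      exact ⟨hfin, inferInstance⟩
    | succ j ih =>
      set n : ℤ := n1 - (j + 1 : ℕ) with hn
      have hn1 : n + 1 = n1 - (j : ℕ) := by push_cast [hn]; ring
      rw [← hn1] at ih
      have hle : FC (n + 1) ≤ FC n := hanti (by omega)
      obtain ⟨hf, hp⟩ := hg n
      set q : Submodule A ↥(FC n) := (FC (n + 1)).comap (FC n).subtype with hq
      let e1 : ↥(q.restrictScalars k) ≃ₗ[k] ↥(FC (n + 1)) :=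
        (LinearEquiv.restrictScalars k
          (Submodule.restrictScalarsEquiv (S := k) (R := A) (M := ↥(FC n)) q)).trans
          ((Submodule.comapSubtypeEquivOfLe hle).restrictScalars k)
      have hsf : Module.Finite k ↥(q.restrictScalars k) :=
        have := ih.1; Module.Finite.equiv e1.symm
      have hsp : Module.Projective k ↥(q.restrictScalars k) :=
        have := ih.2; Module.Projective.of_equiv e1.symm
      let e2 : (↥(FC n) ⧸ q.restrictScalars k) ≃ₗ[k] (↥(FC n) ⧸ q) :=
        Submodule.Quotient.restrictScalarsEquiv k q
      have hqf : Module.Finite k (↥(FC n) ⧸ q.restrictScalars k) :=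
        Module.Finite.equiv e2.symm
      have hqp : Module.Projective k (↥(FC n) ⧸ q.restrictScalars k) :=
        Module.Projective.of_equiv e2.symm
      exact auxFinProjOfSubQuot (q.restrictScalars k) hsf hsp hqf hqp
  obtain ⟨hfin, hproj⟩ := key (n1 - n0).toNat
  have htop : FC (n1 - ((n1 - n0).toNat : ℤ)) = ⊤ := h0 _ (by omega)
  rw [htop] at hfin hproj
  let e3 : ↥(⊤ : Submodule A C) ≃ₗ[k] C :=
    (Submodule.topEquiv (R := A) (M := C)).restrictScalars k
  exact ⟨Module.Finite.equiv e3, Module.Projective.of_equiv e3⟩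

/-- Let `A` be a filtered `k`-algebra with `A/F^1A = k`, and `C ∈ AF_A` a filtered
`A`-module.  Then there is a natural isomorphism `Soc_k(C) ≅ (C* ⊗_A k)*`, where `C*`
carries the adjoint `A`-action (here `C* ⊗_A k = C*/(F^1A)·C*`); the isomorphism is
`A`-linear, i.e. an isomorphism of `A`-modules. -/
theorem socle_eq_dual_of_cogenerators
    (k A C : Type) [CommRing k] [IsNoetherianRing k] [CommRing A] [Algebra k A]
    [AddCommGroup C] [Module k C] [Module A C] [IsScalarTower k A C]
    (FA : ℤ → Ideal A) (hFAanti : Antitone FA) (hFA0 : ∀ m : ℤ, m ≤ 0 → FA m = ⊤)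
    (hFAmul : ∀ m n : ℤ, FA m * FA n ≤ FA (m + n))
    -- `A / F^1 A = k`:
    (hk : Function.Bijective
      (((FA 1).restrictScalars k).mkQ.comp (Algebra.linearMap k A)))
    (FC : ℤ → Submodule A C)
    (hFCsmul : ∀ m n : ℤ, FA m • FC n ≤ FC (m + n))
    (hAF : IsAF k FC) :
    ∃ e : ↥(socleSub k C (FA 1)) ≃ₗ[k]
        Module.Dual k
          (Module.Dual k C ⧸ (FA 1 • (⊤ : Submodule A (Module.Dual k C)))),
      ∀ (a : A) (x : ↥(socleSub k C (FA 1))), e (a • x) = a • e x := by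
  classical
  obtain ⟨hanti, ⟨n0, h0⟩, ⟨n1, h1⟩, hg⟩ := hAF
  obtain ⟨hCfin, hCproj⟩ := auxCFinProj FC hanti n0 h0 n1 h1 hg
  haveI := hCfin; haveI := hCproj
  set I : Submodule A (Module.Dual k C) := FA 1 • (⊤ : Submodule A (Module.Dual k C)) with hI
  set S : Submodule A C := socleSub k C (FA 1) with hS
  -- every element of I vanishes on the socle
  have hvan : ∀ (c : C), c ∈ S → ∀ f ∈ I, f c = 0 := by
    intro c hc f hf
    refine Submodule.smul_induction_on hf ?_ ?_
    · intro ψ hψ g _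
      show (ψ • g) c = 0
      rw [adj_smul_apply, hc ψ hψ, map_zero]
    · intro f₁ f₂ hf₁ hf₂
      show (f₁ + f₂) c = 0
      rw [LinearMap.add_apply, hf₁, hf₂, add_zero]
  let eq0 : (Module.Dual k C ⧸ I) ≃ₗ[k] (Module.Dual k C ⧸ I.restrictScalars k) :=
    (Submodule.Quotient.restrictScalarsEquiv k I).symm
  have hker : ∀ c : ↥S,
      I.restrictScalars k ≤ LinearMap.ker (Module.Dual.eval k C (c : C)) := by
    intro c f hf
    rw [LinearMap.mem_ker]
    exact hvan _ c.2 f hf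
  let Φfun : ↥S → Module.Dual k (Module.Dual k C ⧸ I) := fun c =>
    ((I.restrictScalars k).liftQ (Module.Dual.eval k C (c : C)) (hker c)) ∘ₗ eq0.toLinearMap
  have key : ∀ (c : ↥S) (f : Module.Dual k C),
      Φfun c (Submodule.Quotient.mk f) = f c := by
    intro c f
    show ((I.restrictScalars k).liftQ (Module.Dual.eval k C (c : C)) (hker c))
      (eq0 (Submodule.Quotient.mk f)) = f c
    rw [show eq0 (Submodule.Quotient.mk f) = Submodule.Quotient.mk f from
      Submodule.Quotient.restrictScalarsEquiv_symm_mk k I f]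
    rw [Submodule.liftQ_apply]
    rfl
  let Φ : ↥S →ₗ[k] Module.Dual k (Module.Dual k C ⧸ I) :=
    { toFun := Φfun
      map_add' := fun c d => by
        apply LinearMap.ext; intro y
        obtain ⟨f, rfl⟩ := Submodule.Quotient.mk_surjective _ y
        simp only [key, LinearMap.add_apply, Submodule.coe_add, map_add]
      map_smul' := fun r c => by
        apply LinearMap.ext; intro y
        obtain ⟨f, rfl⟩ := Submodule.Quotient.mk_surjective _ y
        simp only [key, RingHom.id_apply, LinearMap.smul_apply,
          Submodule.coe_smul_of_tower, map_smul] }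
  have key' : ∀ (c : ↥S) (f : Module.Dual k C),
      Φ c (Submodule.Quotient.mk f) = f c := key
  have hinj : Function.Injective Φ := by
    intro c d hcd
    have h1 : ∀ f : Module.Dual k C, f (c : C) = f (d : C) := by
      intro f
      have := congrArg (fun φ => φ (Submodule.Quotient.mk f)) hcd
      simpa only [key'] using this
    have h2 : Module.Dual.eval k C (c : C) = Module.Dual.eval k C (d : C) :=
      LinearMap.ext fun f => h1 f
    exact Subtype.ext ((Module.bijective_dual_eval k C).injective h2)
  have hsurj : Function.Surjective Φ := by
    intro φ
    set ψφ : Module.Dual k (Module.Dual k C) :=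
      φ ∘ₗ (LinearMap.restrictScalars k I.mkQ) with hψφ
    obtain ⟨c, hcψ⟩ := (Module.bijective_dual_eval k C).surjective ψφ
    have hc : c ∈ S := by
      intro a ha
      have h2 : Module.Dual.eval k C (a • c) = 0 := by
        apply LinearMap.ext; intro f
        show f (a • c) = 0
        have h4 : I.mkQ (a • f) = (0 : Module.Dual k C ⧸ I) := by
          rw [Submodule.mkQ_apply, Submodule.Quotient.mk_eq_zero]
          exact Submodule.smul_mem_smul ha trivial
        have h5 : (a • f) c = 0 := by
          have h6 := LinearMap.congr_fun hcψ (a • f)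
          have h7 : ψφ (a • f) = φ (I.mkQ (a • f)) := rfl
          rw [h7, h4, map_zero] at h6
          exact h6
        rw [← adj_smul_apply, h5]
      have := (Module.bijective_dual_eval k C).injective
        (h2.trans (map_zero (Module.Dual.eval k C)).symm)
      exact this
    refine ⟨⟨c, hc⟩, ?_⟩
    apply LinearMap.ext; intro y
    obtain ⟨f, rfl⟩ := Submodule.Quotient.mk_surjective _ y
    have h8 := LinearMap.congr_fun hcψ f
    have h9 : ψφ f = φ (Submodule.Quotient.mk f) := rfl
    rw [h9] at h8
    calc Φ ⟨c, hc⟩ (Submodule.Quotient.mk f) = f c := key' _ f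
      _ = φ (Submodule.Quotient.mk f) := h8
  refine ⟨LinearEquiv.ofBijective Φ ⟨hinj, hsurj⟩, ?_⟩
  intro a x
  apply LinearMap.ext; intro y
  obtain ⟨f, rfl⟩ := Submodule.Quotient.mk_surjective _ y
  show Φ (a • x) (Submodule.Quotient.mk f) = (a • Φ x) (Submodule.Quotient.mk f)
  rw [key', adj_smul_apply, show a • (Submodule.Quotient.mk f : Module.Dual k C ⧸ I)
      = Submodule.Quotient.mk (a • f) from (Submodule.Quotient.mk_smul I a f).symm, key']
  rw [show ((a • x : ↥S) : C) = a • (x : C) from rfl]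
  exact (adj_smul_apply a f (x : C)).symm
end

section
/- Let A be a filtered k-algebra with A/F^1A = k and C ∈ AF_A. If the associated graded module G_•C is level (i.e., (G_•C)* ⊗_A k = G_{-s}((G_•C)*)), then C is level (i.e., C* ⊗_A k = G_{-s}(C*)). -/
/-- `M` is a finitely generated projective (equivalently, locally free of finite rank)
`k`-module of constant rank `r`. -/
def ProjOfRank (k : Type*) [CommRing k] (M : Type*) [AddCommGroup M] [Module k M]
    (r : ℕ) : Prop :=
  Module.Finite k M ∧ Module.Projective k M ∧
    ∀ (P : Ideal k) [P.IsPrime],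
      Module.finrank (Localization P.primeCompl) (LocalizedModule P.primeCompl M) = r

/-- The annihilator of a submodule `W ⊆ C` inside the dual `C*`, as an `A`-submodule
for the adjoint action; this realizes `F^p(C*) = (C/F^{1-p}C)*` as `annSub (F^{1-p}C)`. -/
def annSub (k : Type*) {A : Type*} [CommRing k] [CommRing A] [Algebra k A]
    {C : Type*} [AddCommGroup C] [Module k C] [Module A C] [IsScalarTower k A C]
    (W : Submodule A C) : Submodule A (Module.Dual k C) where
  carrier := {f | ∀ x ∈ W, f x = 0}
  zero_mem' := fun x _ => rfl
  add_mem' := by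
    intro f g hf hg x hx
    rw [LinearMap.add_apply, hf x hx, hg x hx, add_zero]
  smul_mem' := by
    intro a f hf x hx
    exact hf (a • x) (W.smul_mem a hx)

lemma subsingleton_of_projOfRank_zero {k M : Type*} [CommRing k] [IsNoetherianRing k]
    [AddCommGroup M] [Module k M] (hM : ProjOfRank k M 0) : Subsingleton M := by
  obtain ⟨hfin, hproj, hr⟩ := hM
  refine Module.subsingleton_of_localization_maximal
    (Mₚ := fun (P : Ideal k) (_ : P.IsMaximal) => LocalizedModule P.primeCompl M)
    (fun (P : Ideal k) (_ : P.IsMaximal) => LocalizedModule.mkLinearMap P.primeCompl M) ?_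
  intro P hP
  haveI : P.IsPrime := hP.isPrime
  haveI : Module.Finite (Localization P.primeCompl) (LocalizedModule P.primeCompl M) :=
    Module.Finite.of_isLocalizedModule P.primeCompl
      (LocalizedModule.mkLinearMap P.primeCompl M)
  haveI : Module.Projective (Localization P.primeCompl) (LocalizedModule P.primeCompl M) :=
    Module.projective_of_isLocalizedModule P.primeCompl
      (LocalizedModule.mkLinearMap P.primeCompl M)
  haveI : Module.FinitePresentation (Localization P.primeCompl)
      (LocalizedModule P.primeCompl M) :=
    Module.finitePresentation_of_projective _ _
  haveI : Module.Free (Localization P.primeCompl) (LocalizedModule P.primeCompl M) :=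
    Module.free_of_flat_of_isLocalRing
  have h0 := hr P
  rw [Module.finrank_eq_card_chooseBasisIndex] at h0
  haveI : IsEmpty (Module.Free.ChooseBasisIndex (Localization P.primeCompl)
      (LocalizedModule P.primeCompl M)) := by
    rwa [Fintype.card_eq_zero_iff] at h0
  exact ((Module.Free.chooseBasis (Localization P.primeCompl)
    (LocalizedModule P.primeCompl M)).repr.toEquiv.subsingleton)

/-- Let `A` be a filtered `k`-algebra with `A/F^1A = k` and `C ∈ AF_A` with Hilbert
function `h` of top degree `s`.  Filter the dual `C*` (with its adjoint `A`-action) by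
`F^p(C*) = (C/F^{1-p}C)* = annSub (F^{1-p}C)`.  If the associated graded module
`G_•C` is level — equivalently, `G_•(C*)` is generated over `G_•A` in degree `-s`,
i.e. `F^n(C*) = F^{n+s}A • F^{-s}(C*) + F^{n+1}(C*)` for all `n > -s` — then `C` is
level: `C* ⊗_A k = G_{-s}(C*)`, i.e. `(F^1A) • C* = F^{1-s}(C*)`. -/
theorem level_of_graded_level
    (k A C : Type) [CommRing k] [IsNoetherianRing k] [CommRing A] [Algebra k A]
    [AddCommGroup C] [Module k C] [Module A C] [IsScalarTower k A C]
    (FA : ℤ → Ideal A) (hFAanti : Antitone FA) (hFA0 : ∀ m : ℤ, m ≤ 0 → FA m = ⊤)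
    (hFAmul : ∀ m n : ℤ, FA m * FA n ≤ FA (m + n))
    -- `A / F^1 A = k`:
    (hk : Function.Bijective
      (((FA 1).restrictScalars k).mkQ.comp (Algebra.linearMap k A)))
    (FC : ℤ → Submodule A C) (hFCanti : Antitone FC)
    (hFCsmul : ∀ m n : ℤ, FA m • FC n ≤ FC (m + n))
    (hlo : ∃ n0 : ℤ, ∀ n ≤ n0, FC n = ⊤) (hhi : ∃ n1 : ℤ, ∀ n ≥ n1, FC n = ⊥)
    (h : ℤ → ℕ) (s : ℤ)
    (hrank : ∀ n : ℤ,
      ProjOfRank k (↥(FC n) ⧸ (FC (n + 1)).comap (FC n).subtype) (h n))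
    (hs : h s ≠ 0) (hstop : ∀ p : ℤ, s < p → h p = 0)
    -- `G_• C` is level:
    (hgr : ∀ n : ℤ, -s < n →
      annSub k (FC (1 - n)) =
        (FA (n + s) • annSub k (FC (1 + s))) ⊔ annSub k (FC (-n))) :
    -- `C` is level:
    FA 1 • (⊤ : Submodule A (Module.Dual k C)) = annSub k (FC s) := by
  classical
  -- `FC p = FC (p+1)` for `p > s`
  have hstep : ∀ p : ℤ, s < p → FC p ≤ FC (p + 1) := by
    intro p hp
    have hsub : Subsingleton (↥(FC p) ⧸ (FC (p + 1)).comap (FC p).subtype) := by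
      have h0 := hrank p
      rw [hstop p hp] at h0
      exact subsingleton_of_projOfRank_zero h0
    intro x hx
    have hq : (Submodule.Quotient.mk (⟨x, hx⟩ : FC p) :
        ↥(FC p) ⧸ (FC (p + 1)).comap (FC p).subtype) = 0 := Subsingleton.elim _ _
    rwa [Submodule.Quotient.mk_eq_zero, Submodule.mem_comap] at hq
  obtain ⟨n1, hn1⟩ := hhi
  have hbot : FC (1 + s) = ⊥ := by
    have key : ∀ j : ℕ, FC (1 + s) ≤ FC (1 + s + j) := by
      intro j
      induction j with
      | zero => simp
      | succ j ih =>
        refine le_trans ih (le_trans (hstep (1 + s + j) (by omega)) (le_of_eq ?_))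
        congr 1
        push_cast
        ring
    refine le_bot_iff.mp ?_
    calc FC (1 + s) ≤ FC (1 + s + ((n1 - (1 + s)).toNat : ℤ)) := key _
      _ = ⊥ := hn1 _ (by omega)
  have hannbot : annSub k (FC (1 + s)) = (⊤ : Submodule A (Module.Dual k C)) := by
    rw [eq_top_iff]
    intro f _ x hx
    rw [hbot, Submodule.mem_bot] at hx
    rw [hx, map_zero]
  have hanntop : annSub k (⊤ : Submodule A C) = (⊥ : Submodule A (Module.Dual k C)) := by
    rw [eq_bot_iff]
    intro f hf
    rw [Submodule.mem_bot]
    ext x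
    exact hf x trivial
  obtain ⟨n0, hn0⟩ := hlo
  set m0 : ℤ := min n0 s with hm0
  have hm0n0 : m0 ≤ n0 := min_le_left _ _
  have hm0s : m0 ≤ s := min_le_right _ _
  have claim : ∀ i : ℕ, m0 + i ≤ s →
      annSub k (FC (m0 + i)) ≤ FA 1 • (⊤ : Submodule A (Module.Dual k C)) := by
    intro i
    induction i with
    | zero =>
      intro _
      have hO : FC (m0 + ((0 : ℕ) : ℤ)) = ⊤ := by
        rw [show (m0 + ((0 : ℕ) : ℤ)) = m0 by push_cast; ring]
        exact hn0 _ hm0n0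
      rw [hO, hanntop]
      exact bot_le
    | succ i ih =>
      intro hle
      have hle' : m0 + (i : ℤ) + 1 ≤ s := by push_cast at hle ⊢; omega
      have hn : -s < -(m0 + (i : ℤ)) := by omega
      have hg := hgr (-(m0 + (i : ℤ))) hn
      rw [hannbot] at hg
      rw [show ((1 : ℤ) - -(m0 + (i : ℤ))) = m0 + ((i + 1 : ℕ) : ℤ) by push_cast; ring,
        show (-(-(m0 + (i : ℤ)))) = m0 + (i : ℤ) by ring] at hg
      rw [hg]
      refine sup_le ?_ (ih (by omega))
      exact Submodule.smul_mono_left (hFAanti (by omega))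
  refine le_antisymm ?_ ?_
  · refine Submodule.smul_le.mpr fun a ha f _ => ?_
    intro x hx
    have hax : a • x ∈ FC (1 + s) := hFCsmul 1 s (Submodule.smul_mem_smul ha hx)
    rw [hbot, Submodule.mem_bot] at hax
    show f (a • x) = 0
    rw [hax, map_zero]
  · have hfinal := claim (s - m0).toNat (by omega)
    rwa [show m0 + ((s - m0).toNat : ℤ) = s by omega] at hfinal
end

section
/- Let A → M →^μ N →^ν P be filtered A-modules with exhaustive filtrations and ν∘μ(M) ⊆ F^{n+1}P, and suppose G_p M → G_p N → G_p P is exact for all p < n. Set D := Im ν with filtration F^p D := D ∩ F^p P. Then G_p D = Im(G_p ν : G_p N → G_p P) for all p ≤ n. -/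
universe u

/-- Let `M →μ N →ν P` be filtered modules over a filtered `k`-algebra `A`, with
exhaustive filtrations, `ν∘μ(M) ⊆ F^{n+1}P`, and with `G_p M → G_p N → G_p P` exact for
all `p < n`.  Let `D := Im ν` with the filtration `F^p D := D ∩ F^p P`.  Then
`G_p D = Im (G_p ν)` for all `p ≤ n`; unpacked: every `z ∈ D ∩ F^p P` satisfies
`z ≡ ν y mod F^{p+1} P` for some `y ∈ F^p N` (the reverse inclusion being automatic). -/
theorem graded_piece_of_image
    (k A : Type u) [CommRing k] [CommRing A] [Algebra k A]
    (FA : ℤ → Ideal A) (hFAanti : Antitone FA) (hFA0 : ∀ m : ℤ, m ≤ 0 → FA m = ⊤)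
    (hFAmul : ∀ m n : ℤ, FA m * FA n ≤ FA (m + n))
    (M N P : Type u) [AddCommGroup M] [Module A M] [AddCommGroup N] [Module A N]
    [AddCommGroup P] [Module A P]
    (FM : ℤ → Submodule A M) (FN : ℤ → Submodule A N) (FP : ℤ → Submodule A P)
    (hFMa : Antitone FM) (hFNa : Antitone FN) (hFPa : Antitone FP)
    (hFM : ∀ a b : ℤ, FA a • FM b ≤ FM (a + b))
    (hFN : ∀ a b : ℤ, FA a • FN b ≤ FN (a + b))
    (hFP : ∀ a b : ℤ, FA a • FP b ≤ FP (a + b))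
    -- exhaustive filtrations
    (hexhM : ∀ x : M, ∃ q : ℤ, x ∈ FM q)
    (hexhN : ∀ y : N, ∃ q : ℤ, y ∈ FN q)
    (hexhP : ∀ z : P, ∃ q : ℤ, z ∈ FP q)
    (μ : M →ₗ[A] N) (ν : N →ₗ[A] P)
    (hμ : ∀ p : ℤ, (FM p).map μ ≤ FN p) (hν : ∀ p : ℤ, (FN p).map ν ≤ FP p)
    (n : ℤ)
    -- `ν ∘ μ (M) ⊆ F^{n+1} P`
    (hcomp : ∀ x : M, ν (μ x) ∈ FP (n + 1))
    -- `G_p M → G_p N → G_p P` is exact for `p < n`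
    (hexact : ∀ p : ℤ, p < n → ∀ y ∈ FN p, ν y ∈ FP (p + 1) →
      ∃ x ∈ FM p, y - μ x ∈ FN (p + 1)) :
    ∀ p : ℤ, p ≤ n → ∀ z ∈ LinearMap.range ν ⊓ FP p,
      ∃ y ∈ FN p, ν y - z ∈ FP (p + 1) := by

  intro p hp z hz
  obtain ⟨⟨w, hw⟩, hzP⟩ := hz
  obtain ⟨q, hq⟩ := hexhN w
  -- key claim: climb from p - j up to p
  have key : ∀ j : ℕ, ∀ w : N, w ∈ FN (p - j) → ν w - z ∈ FP (p + 1) →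
      ∃ y ∈ FN p, ν y - z ∈ FP (p + 1) := by
    intro j
    induction j with
    | zero =>
      intro w hw hd
      exact ⟨w, by simpa using hw, hd⟩
    | succ j ih =>
      intro w hw hd
      set q' : ℤ := p - (j + 1 : ℕ) with hq'
      have hq'lt : q' < n := by
        have : q' < p := by
          simp only [hq']
          push_cast
          omega
        omega
      have hq'1 : q' + 1 ≤ p := by simp only [hq']; push_cast; omega
      have hνw : ν w ∈ FP (q' + 1) := by
        have : ν w = (ν w - z) + z := by abel
        rw [this]
        exact (FP (q' + 1)).add_mem
          (hFPa (by omega) hd) (hFPa hq'1 hzP)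
      obtain ⟨x, hx, hwx⟩ := hexact q' hq'lt w hw hνw
      have hwx' : w - μ x ∈ FN (p - j) := by
        have : q' + 1 = p - j := by simp only [hq']; push_cast; omega
        rwa [this] at hwx
      refine ih (w - μ x) hwx' ?_
      have : ν (w - μ x) - z = (ν w - z) - ν (μ x) := by
        simp [map_sub]; abel
      rw [this]
      exact (FP (p + 1)).sub_mem hd (hFPa (by omega) (hcomp x))
  by_cases hle : p ≤ q
  · refine ⟨w, hFNa hle hq, ?_⟩
    rw [hw, sub_self]
    exact (FP (p + 1)).zero_mem
  · push_neg at hle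
    refine key (p - q).toNat w ?_ ?_
    · have : p - ((p - q).toNat : ℤ) = q := by omega
      rwa [this]
    · rw [hw, sub_self]
      exact (FP (p + 1)).zero_mem
end
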